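/- arXiv:1206.3923 — 3 statements merged into one kernel-verified Lean document; each statement's English description precedes it below -/
import Mathlib

section
/- Let (M,g,J) be a Kähler manifold and X = J(∇τ) a holomorphic Killing vector field with Kähler potential τ. Set Q = g(∇τ, ∇τ). Then ∇τ is an eigenvector field of the Hessian H^τ = ∇dτ (at points where dτ ≠ 0) if and only if dQ = 2Λ dτ for some function Λ, and in that case Λ is the corresponding eigenvalue of H^τ on span{∇τ, J∇τ}. -/
open scoped RealInnerProductSpace

/-- Proposition 3.1 (pointwise form at a point where `dτ ≠ 0`): on a Kähler manifold
with holomorphic Killing field `X = J∇τ`, the Hessian `H^τ(Y,Z) = g(∇_Y ∇τ, Z)` is a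
symmetric `J`-commuting endomorphism `H`, and `dQ = 2 H^τ(∇τ, ·)` (since
`X⌟dd^cτ = −dQ` and `dd^cτ(Y,Z) = 2H^τ(JY,Z)`).  Then `v = ∇τ` is an eigenvector of
`H^τ` iff `dQ = 2Λ dτ` for some function `Λ`, and in that case `Λ` is the eigenvalue
of `H^τ` on `span{∇τ, J∇τ}`. -/
theorem stmt_1 {V : Type*} [NormedAddCommGroup V] [InnerProductSpace ℝ V]
    (J : V →ₗ[ℝ] V) (hJ2 : ∀ x, J (J x) = -x)
    (hJorth : ∀ x y, ⟪J x, J y⟫ = ⟪x, y⟫)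
    (H : V →ₗ[ℝ] V) (hHsym : ∀ x y, ⟪H x, y⟫ = ⟪x, H y⟫)
    (hHJ : ∀ x, H (J x) = J (H x))
    (v : V) (hv : v ≠ 0)
    (dτ dQ : V → ℝ)
    (hdτ : ∀ y, dτ y = ⟪v, y⟫)
    (hdQ : ∀ y, dQ y = 2 * ⟪H v, y⟫) :
    (∃ Λ : ℝ, H v = Λ • v) ↔ (∃ Λ : ℝ, ∀ y, dQ y = 2 * Λ * dτ y) ∧
      (∀ Λ : ℝ, (∀ y, dQ y = 2 * Λ * dτ y) → H v = Λ • v ∧ H (J v) = Λ • J v) := by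
  have key : ∀ Λ : ℝ, (∀ y, dQ y = 2 * Λ * dτ y) → H v = Λ • v := by
    intro Λ h
    have h2 : ∀ y, ⟪H v - Λ • v, y⟫ = 0 := by
      intro y
      have := h y
      rw [hdQ, hdτ] at this
      have hv' : ⟪v, y⟫ = ⟪(Λ:ℝ) • v, y⟫ / Λ ∨ True := Or.inr trivial
      rw [inner_sub_left, real_inner_smul_left]
      have hHvy : ⟪H v, y⟫ = Λ * ⟪v, y⟫ := by linarith
      linarith
    have := h2 (H v - Λ • v)
    rw [inner_self_eq_zero] at this
    exact sub_eq_zero.mp this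
  constructor
  · rintro ⟨Λ, hΛ⟩
    refine ⟨⟨Λ, fun y => ?_⟩, fun Λ' h => ?_⟩
    · rw [hdQ, hdτ, hΛ, real_inner_smul_left]; ring
    · have h1 := key Λ' h
      exact ⟨h1, by rw [hHJ, h1, map_smul]⟩
  · rintro ⟨⟨Λ, hΛ⟩, _⟩
    exact ⟨Λ, key Λ hΛ⟩
end

section
/- Let X = J(∇τ) be a holomorphic Killing field on a Kähler manifold (M,g,J) and let U = {x : X(x) ≠ 0}. Then on U the following are equivalent: (a) X is an eigenfield of the Hessian H^τ; (b) v = ∇τ is pregeodesic, i.e. ∇_v v = Λv for some function Λ; (c) the distribution V = span(X, JX) is totally geodesic; (d) V is an eigendistribution of H^τ; (e) dQ = 2Λ dτ where Q = g(∇τ,∇τ). -/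
open scoped RealInnerProductSpace

/-- Proposition 3.4 (pointwise form on `U = {X ≠ 0}`): for a holomorphic Killing field
`X = J∇τ` with Hessian endomorphism `H` (`H Y = ∇_Y ∇τ`, symmetric and commuting with
`J`), and `v = ∇τ ≠ 0`, TFAE:
(a) `X = Jv` is an eigenfield of `H^τ`;
(b) `v = ∇τ` is pregeodesic, `∇_v v = Λ v` (here `∇_v v = H v`);
(c) the distribution `V = span(X, JX) = span{v, Jv}` is totally geodesic
    (its covariant derivatives `H v, JH v, H(Jv), JH(Jv)` stay in the span);
(d) `V` is an eigendistribution of `H^τ`;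
(e) `dQ = 2Λ dτ`, where `Q = g(∇τ, ∇τ)` and `dQ = 2⟪H v, ·⟫`, `dτ = ⟪v, ·⟫`. -/
theorem stmt_2 {V : Type*} [NormedAddCommGroup V] [InnerProductSpace ℝ V]
    (J : V →ₗ[ℝ] V) (hJ2 : ∀ x, J (J x) = -x)
    (hJorth : ∀ x y, ⟪J x, J y⟫ = ⟪x, y⟫)
    (H : V →ₗ[ℝ] V) (hHsym : ∀ x y, ⟪H x, y⟫ = ⟪x, H y⟫)
    (hHJ : ∀ x, H (J x) = J (H x))
    (v : V) (hv : v ≠ 0) :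
    [(∃ Λ : ℝ, H (J v) = Λ • J v),
     (∃ Λ : ℝ, H v = Λ • v),
     (H v ∈ Submodule.span ℝ {v, J v} ∧ J (H v) ∈ Submodule.span ℝ {v, J v} ∧
       H (J v) ∈ Submodule.span ℝ {v, J v} ∧ J (H (J v)) ∈ Submodule.span ℝ {v, J v}),
     (∃ Λ : ℝ, H v = Λ • v ∧ H (J v) = Λ • J v),
     (∃ Λ : ℝ, ∀ y, 2 * ⟪H v, y⟫ = 2 * Λ * ⟪v, y⟫)].TFAE := by
  have hskew : ∀ x y : V, ⟪J x, y⟫ = -⟪x, J y⟫ := by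
    intro x y
    have h := hJorth x (J y)
    rw [hJ2, inner_neg_right] at h
    linarith
  have hvJv : ⟪v, J v⟫ = 0 := by
    have h := hskew v v
    linarith [real_inner_comm v (J v)]
  have hJvv : ⟪J v, v⟫ = 0 := by rw [real_inner_comm]; exact hvJv
  have hJvne : J v ≠ 0 := by
    intro h
    have := hJ2 v
    rw [h, map_zero] at this
    exact hv (by simpa using this.symm)
  tfae_have 1 → 2
  | ⟨Λ, hΛ⟩ => by
    refine ⟨Λ, ?_⟩
    have h : J (H v) = Λ • J v := by rw [← hHJ, hΛ]
    have h2 := congrArg J h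
    rw [hJ2, map_smul, hJ2, smul_neg] at h2
    exact neg_injective h2
  tfae_have 2 → 4
  | ⟨Λ, hΛ⟩ => ⟨Λ, hΛ, by rw [hHJ, hΛ, map_smul]⟩
  tfae_have 4 → 1
  | ⟨Λ, _, h⟩ => ⟨Λ, h⟩
  tfae_have 4 → 3
  | ⟨Λ, h1, h2⟩ => by
    have hvmem : v ∈ Submodule.span ℝ {v, J v} :=
      Submodule.subset_span (by simp)
    have hJvmem : J v ∈ Submodule.span ℝ {v, J v} :=
      Submodule.subset_span (by simp)
    refine ⟨?_, ?_, ?_, ?_⟩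
    · rw [h1]; exact Submodule.smul_mem _ _ hvmem
    · rw [h1, map_smul]; exact Submodule.smul_mem _ _ hJvmem
    · rw [h2]; exact Submodule.smul_mem _ _ hJvmem
    · rw [h2, map_smul, hJ2]
      exact Submodule.smul_mem _ _ (Submodule.neg_mem _ hvmem)
  tfae_have 3 → 1
  | ⟨_, _, h, _⟩ => by
    rw [Submodule.mem_span_pair] at h
    obtain ⟨a, b, hab⟩ := h
    have horth : ⟪H (J v), v⟫ = 0 := by
      have h1 : ⟪H (J v), v⟫ = ⟪J v, H v⟫ := by
        rw [hHsym, real_inner_comm]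
      have h2 : ⟪J v, H v⟫ = -⟪v, J (H v)⟫ := hskew v (H v)
      rw [← hHJ] at h2
      have h3 : ⟪v, H (J v)⟫ = ⟪H (J v), v⟫ := real_inner_comm _ _
      rw [h1, h2, h3] at *
      linarith [h1, h2, h3]
    have ha : a = 0 := by
      have := congrArg (fun x => ⟪x, v⟫) hab
      simp only [inner_add_left, real_inner_smul_left, hJvv, horth] at this
      have hvv : ⟪v, v⟫ ≠ 0 := by
        rw [real_inner_self_eq_norm_sq]
        exact pow_ne_zero 2 (norm_ne_zero_iff.mpr hv)
      have ha' : a * ⟪v, v⟫ = 0 := by linarith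
      rcases mul_eq_zero.mp ha' with h | h
      · exact h
      · exact absurd h hvv
    exact ⟨b, by rw [← hab, ha]; simp⟩
  tfae_have 2 → 5
  | ⟨Λ, hΛ⟩ => by
    refine ⟨Λ, fun y => ?_⟩
    rw [hΛ, real_inner_smul_left]
    ring
  tfae_have 5 → 2
  | ⟨Λ, hΛ⟩ => by
    refine ⟨Λ, ?_⟩
    have : ∀ y, ⟪H v - Λ • v, y⟫ = 0 := by
      intro y
      have := hΛ y
      rw [inner_sub_left, real_inner_smul_left]
      linarith
    have := inner_self_eq_zero.mp (this (H v - Λ • v))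
    rwa [sub_eq_zero] at this
  tfae_finish
end

section
/- In the setting of the circle bundle P over a Kähler manifold N with metric g = a²θ⊗θ + b²p*h and dθ = s p*Ω_N, for horizontal X, Y one has R(X, ξ, Y, ξ) = −(s²a⁴/(4b²)) h(X_*, Y_*) and R(X,Y,Z,ξ) = 0 for horizontal X,Y,Z; consequently ρ(ξ, X) = 0 whenever g(X, ξ) = 0, i.e. ξ is an eigenfield of the Ricci tensor. -/
open scoped RealInnerProductSpace

/-- Section 8 (equations (8.9)–(8.10)): on the circle bundle `P` over the Kähler
manifold `N` with metric `g = a²θ⊗θ + b²p*h` and `dθ = s p*Ω_N`, the computation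
`R(X,ξ)Y = ∇T(X,Y) = −(s²a²/(4b²)) h(X_*,Y_*) ξ` for horizontal `X, Y` (encoded in
`hRvec`, with `h(X_*,Y_*) = (1/b²)g(X,Y)`) gives
`R(X,ξ,Y,ξ) = −(s²a⁴/(4b²)) h(X_*,Y_*)` and `R(X,Y,Z,ξ) = 0` for horizontal `X,Y,Z`;
consequently `ρ(ξ,X) = 0` whenever `X` is horizontal (`g(X,ξ) = 0`), i.e. `ξ` is an
eigenfield of the Ricci tensor. -/
theorem stmt_11 {V : Type*} [NormedAddCommGroup V] [InnerProductSpace ℝ V]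
    (a b s : ℝ) (ha : a ≠ 0) (hb : b ≠ 0)
    (Hs : Submodule ℝ V) (ξ : V) (hξnorm : ‖ξ‖ ^ 2 = a ^ 2)
    (hξorth : ∀ x ∈ Hs, ⟪ξ, x⟫ = 0)
    (Rop : V → V → V → V) (R4 : V → V → V → V → ℝ)
    (hR4 : ∀ X Y Z W, R4 X Y Z W = ⟪Rop X Y Z, W⟫)
    (hpair : ∀ X Y Z W, R4 X Y Z W = R4 Z W X Y)
    (hanti : ∀ X Y Z W, R4 X Y Z W = -R4 Y X Z W)
    (hRvec : ∀ X ∈ Hs, ∀ Y ∈ Hs,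
      Rop X ξ Y = (-(s ^ 2 * a ^ 2 / (4 * b ^ 2)) * ((1 / b ^ 2) * ⟪X, Y⟫)) • ξ)
    (k : ℕ) (e : Fin k → V) (he : ∀ i, e i ∈ Hs)
    (ρ : V → V → ℝ)
    (hρ : ∀ u v, ρ u v = (∑ i, R4 (e i) u v (e i)) + (1 / a ^ 2) * R4 ξ u v ξ) :
    (∀ X ∈ Hs, ∀ Y ∈ Hs,
        R4 X ξ Y ξ = -(s ^ 2 * a ^ 4 / (4 * b ^ 2)) * ((1 / b ^ 2) * ⟪X, Y⟫)) ∧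
    (∀ X ∈ Hs, ∀ Y ∈ Hs, ∀ Z ∈ Hs, R4 X Y Z ξ = 0) ∧
    (∀ X ∈ Hs, ρ ξ X = 0) := by
  have hone : ∀ X ∈ Hs, ∀ Y ∈ Hs,
      R4 X ξ Y ξ = -(s ^ 2 * a ^ 4 / (4 * b ^ 2)) * ((1 / b ^ 2) * ⟪X, Y⟫) := by
    intro X hX Y hY
    rw [hR4, hRvec X hX Y hY, real_inner_smul_left, real_inner_self_eq_norm_sq, hξnorm]
    ring
  have htwo : ∀ X ∈ Hs, ∀ Y ∈ Hs, ∀ Z ∈ Hs, R4 X Y Z ξ = 0 := by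
    intro X hX Y hY Z hZ
    rw [hpair, hR4, hRvec Z hZ X hX, real_inner_smul_left, hξorth Y hY, mul_zero]
  refine ⟨hone, htwo, ?_⟩
  intro X hX
  rw [hρ]
  have h2 : R4 ξ ξ X ξ = 0 := by
    have := hanti ξ ξ X ξ; linarith
  have h1 : ∀ i, R4 (e i) ξ X (e i) = 0 := by
    intro i
    rw [hR4, hRvec (e i) (he i) X hX, real_inner_smul_left, hξorth (e i) (he i), mul_zero]
  simp [h1, h2]
end
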